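/- Let q, a, b, c ∈ ℂ with |q| < 1, a ≠ 0, b ≠ 0, |c/(a b)| < 1, and suppose c q^j ≠ 1 and a q^j ≠ 1 for all integers j ≥ 0. Then for every integer k ≥ 0 the companion identity of the q-Gauss sum holds: ∑_{j=0}^k (a;q)_j (b;q)_j (c/(a b))^j / ((q;q)_j (c;q)_j) = ((c/b;q)_∞ / (c;q)_∞) · ∑_{j=0}^k (b;q)_j (c/(a b))^j / (q;q)_j + ((a;q)_{k+1} (b;q)_{k+1} c^{k+1} / ((q;q)_k (c;q)_{k+1} a^k b^{k+1})) · ∑_{n=0}^∞ (a q^{k+1};q)_n (c/b;q)_n q^n / ((a;q)_{n+1} (c q^{k+1};q)_n), where the infinite series on the right converges absolutely. -/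

import Mathlib

/-!
With `z = c/(ab)`, the functions
`F(n, j) = (c/b;q)_n (aq^n;q)_j (b;q)_j z^j / ((c;q)_n (cq^n;q)_j (q;q)_j)` and the
matching `G` form a WZ pair: `F(n+1, j) - F(n, j) = G(n, j+1) - G(n, j)` with `G(n, 0) = 0`.
Summing over `j ≤ k` and telescoping in `n` gives
`∑_{j ≤ k} F(0, j) = lim_N ∑_{j ≤ k} F(N, j) - ∑_n G(n, k+1)`.
Here `F(0, j)` is the summand on the left, `F(N, j)` tends to `(c/b;q)_∞ / (c;q)_∞` times the
summand of the first sum on the right, and `G(n, k+1)` is minus the constant times the `n`-th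
term of the remaining series, whose terms are `O(q^n)`.
-/

/-- The finite q-shifted factorial `(a;q)_n = ∏_{j=0}^{n-1} (1 - a q^j)`. -/
noncomputable def qPoch (q a : ℂ) (n : ℕ) : ℂ := ∏ j ∈ Finset.range n, (1 - a * q ^ j)

/-- The infinite q-shifted factorial `(a;q)_∞ = ∏_{j=0}^{∞} (1 - a q^j)`. -/
noncomputable def qPochInf (q a : ℂ) : ℂ := ∏' j : ℕ, (1 - a * q ^ j)

open Filter Topology

section Algebra

variable (q : ℂ)

lemma qPoch_zero (x : ℂ) : qPoch q x 0 = 1 := Finset.prod_range_zero _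

lemma qPoch_succ (x : ℂ) (n : ℕ) : qPoch q x (n + 1) = qPoch q x n * (1 - x * q ^ n) :=
  Finset.prod_range_succ _ _

lemma qPoch_succ' (x : ℂ) (n : ℕ) :
    qPoch q x (n + 1) = (1 - x) * qPoch q (x * q) n := by
  rw [qPoch, Finset.prod_range_succ', pow_zero, mul_one, mul_comm, qPoch]
  simp only [pow_succ', mul_assoc]

lemma qPoch_add (x : ℂ) (m n : ℕ) :
    qPoch q x (m + n) = qPoch q x m * qPoch q (x * q ^ m) n := by
  simp only [qPoch, Finset.prod_range_add, pow_add, mul_assoc]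

lemma qPoch_zero_left (n : ℕ) : qPoch q 0 n = 1 := by simp [qPoch]

variable {q}

lemma qPoch_ne_zero {x : ℂ} (hx : ∀ j : ℕ, x * q ^ j ≠ 1) (n : ℕ) : qPoch q x n ≠ 0 :=
  Finset.prod_ne_zero_iff.2 fun j _ => sub_ne_zero.2 (hx j).symm

lemma mul_pow_mul_pow_ne_one {x : ℂ} (hx : ∀ j : ℕ, x * q ^ j ≠ 1) (m j : ℕ) :
    x * q ^ m * q ^ j ≠ 1 := by
  rw [mul_assoc, ← pow_add]
  exact hx _

lemma mul_pow_ne_one (hq : ‖q‖ < 1) (j : ℕ) : q * q ^ j ≠ 1 := by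
  rw [← pow_succ']
  exact ne_of_apply_ne norm (by simpa using (pow_lt_one₀ (norm_nonneg q) hq j.succ_ne_zero).ne)

lemma qPoch_self_ne_zero (hq : ‖q‖ < 1) (n : ℕ) : qPoch q q n ≠ 0 :=
  qPoch_ne_zero (mul_pow_ne_one hq) n

end Algebra

section Analysis

variable {q : ℂ}

lemma summable_norm_mul_pow (hq : ‖q‖ < 1) (x : ℂ) : Summable fun n : ℕ => ‖x * q ^ n‖ := by
  simpa [norm_mul, norm_pow] using
    (summable_geometric_of_lt_one (norm_nonneg q) hq).mul_left ‖x‖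

lemma multipliable_one_sub_mul_pow (hq : ‖q‖ < 1) (x : ℂ) :
    Multipliable fun n : ℕ => 1 - x * q ^ n := by
  simpa [sub_eq_add_neg] using multipliable_one_add_of_summable (f := fun n => -(x * q ^ n))
    (by simpa using summable_norm_mul_pow hq x)

lemma tendsto_qPoch (hq : ‖q‖ < 1) (x : ℂ) : Tendsto (qPoch q x) atTop (𝓝 (qPochInf q x)) :=
  (multipliable_one_sub_mul_pow hq x).tendsto_prod_tprod_nat

lemma qPochInf_ne_zero (hq : ‖q‖ < 1) {x : ℂ} (hx : ∀ j : ℕ, x * q ^ j ≠ 1) :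
    qPochInf q x ≠ 0 := by
  simpa [qPochInf, sub_eq_add_neg] using tprod_one_add_ne_zero_of_summable
    (f := fun n => -(x * q ^ n))
    (fun j => by simpa [← sub_eq_add_neg, sub_eq_zero] using (hx j).symm)
    (by simpa using summable_norm_mul_pow hq x)

lemma tendsto_qPoch_mul_pow (hq : ‖q‖ < 1) (x : ℂ) (j : ℕ) :
    Tendsto (fun N : ℕ => qPoch q (x * q ^ N) j) atTop (𝓝 1) := by
  have hcont : Continuous fun y => qPoch q y j := by
    unfold qPoch
    fun_prop
  have hlim : Tendsto (fun N : ℕ => x * q ^ N) atTop (𝓝 0) := by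
    simpa using (tendsto_pow_atTop_nhds_zero_of_norm_lt_one hq).const_mul x
  exact qPoch_zero_left q j ▸ (hcont.tendsto 0).comp hlim

end Analysis

theorem sum_range_eq_sub_tsum_of_wz {E : Type*} [AddCommGroup E] [TopologicalSpace E]
    [IsTopologicalAddGroup E] [T2Space E] {F G : ℕ → ℕ → E}
    (hFG : ∀ n j, F (n + 1) j - F n j = G n (j + 1) - G n j) (hG : ∀ n, G n 0 = 0)
    {m : ℕ} {L : E} (hF : Tendsto (fun N => ∑ j ∈ Finset.range m, F N j) atTop (𝓝 L))
    (hGm : Summable fun n => G n m) :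
    ∑ j ∈ Finset.range m, F 0 j = L - ∑' n, G n m := by
  have hpartial (N : ℕ) : ∑ n ∈ Finset.range N, G n m =
      ∑ j ∈ Finset.range m, F N j - ∑ j ∈ Finset.range m, F 0 j := by
    calc ∑ n ∈ Finset.range N, G n m
        = ∑ n ∈ Finset.range N, ∑ j ∈ Finset.range m, (G n (j + 1) - G n j) := by
          simp only [Finset.sum_range_sub, hG, sub_zero]
      _ = ∑ j ∈ Finset.range m, ∑ n ∈ Finset.range N, (F (n + 1) j - F n j) := by
          rw [Finset.sum_comm]; simp only [hFG]
      _ = ∑ j ∈ Finset.range m, (F N j - F 0 j) :=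
          Finset.sum_congr rfl fun j _ => Finset.sum_range_sub (F · j) N
      _ = _ := Finset.sum_sub_distrib _ _
  have hlim := hGm.hasSum.tendsto_sum_nat
  simp only [hpartial] at hlim
  rw [tendsto_nhds_unique hlim (hF.sub_const _), sub_sub_cancel]

noncomputable def wzF (q a b c : ℂ) (n j : ℕ) : ℂ :=
  qPoch q (c / b) n / qPoch q c n * (qPoch q (a * q ^ n) j / qPoch q (c * q ^ n) j) *
    (qPoch q b j * (c / (a * b)) ^ j / qPoch q q j)

noncomputable def wzG (q a b c : ℂ) (n : ℕ) : ℕ → ℂ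
  | 0 => 0
  | j + 1 => -(c / b * q ^ n * qPoch q (c / b) n / qPoch q c n *
      (qPoch q (a * q ^ (n + 1)) j / qPoch q (c * q ^ n) (j + 1)) *
      (qPoch q b (j + 1) * (c / (a * b)) ^ j / qPoch q q j))

lemma wzF_succ_sub {q a b c : ℂ} (hq : ‖q‖ < 1) (ha : a ≠ 0) (hb : b ≠ 0)
    (hc : ∀ j : ℕ, c * q ^ j ≠ 1) (n j : ℕ) :
    wzF q a b c (n + 1) j - wzF q a b c n j = wzG q a b c n (j + 1) - wzG q a b c n j := by
  have hcn : 1 - c * q ^ n ≠ 0 := sub_ne_zero.2 (hc n).symm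
  have hC := qPoch_ne_zero hc n
  cases j with
  | zero =>
    simp only [wzF, wzG, pow_succ, ← mul_assoc, qPoch_succ' q (c * q ^ n), qPoch_succ q _ n,
      qPoch_zero, qPoch_succ q b 0, zero_add, pow_zero]
    field_simp
    ring
  | succ j =>
    have hcq : ∀ i, c * q ^ n * q * q ^ i ≠ 1 := by
      simpa only [pow_succ, mul_assoc] using mul_pow_mul_pow_ne_one hc (n + 1)
    have hcqj : 1 - c * q ^ n * q * q ^ j ≠ 0 := sub_ne_zero.2 (hcq j).symm
    have hC' := qPoch_ne_zero hcq j
    have hQ := qPoch_self_ne_zero hq j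
    have hQ' : 1 - q * q ^ j ≠ 0 := sub_ne_zero.2 (mul_pow_ne_one hq j).symm
    simp only [wzF, wzG, pow_succ, ← mul_assoc, qPoch_succ' q (a * q ^ n),
      qPoch_succ' q (c * q ^ n), qPoch_succ q _ n, qPoch_succ q _ (j + 1), qPoch_succ q _ j]
    field_simp
    ring

lemma wzF_zero_left (q a b c : ℂ) (j : ℕ) :
    wzF q a b c 0 j =
      qPoch q a j * qPoch q b j * (c / (a * b)) ^ j / (qPoch q q j * qPoch q c j) := by
  simp only [wzF, qPoch_zero, pow_zero, mul_one]
  ring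

lemma tendsto_sum_wzF {q : ℂ} (hq : ‖q‖ < 1) (a b : ℂ) {c : ℂ} (hc : ∀ j : ℕ, c * q ^ j ≠ 1)
    (m : ℕ) :
    Tendsto (fun N => ∑ j ∈ Finset.range m, wzF q a b c N j) atTop
      (𝓝 (qPochInf q (c / b) / qPochInf q c *
        ∑ j ∈ Finset.range m, qPoch q b j * (c / (a * b)) ^ j / qPoch q q j)) := by
  rw [Finset.mul_sum]
  refine tendsto_finsetSum _ fun j _ => ?_
  simpa [wzF] using (((tendsto_qPoch hq _).div (tendsto_qPoch hq c) (qPochInf_ne_zero hq hc)).mul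
    ((tendsto_qPoch_mul_pow hq a j).div (tendsto_qPoch_mul_pow hq c j) one_ne_zero)).mul_const
    (qPoch q b j * (c / (a * b)) ^ j / qPoch q q j)

lemma wzG_succ {q a : ℂ} (ha : ∀ j : ℕ, a * q ^ j ≠ 1) (b c : ℂ) (k n : ℕ) :
    wzG q a b c n (k + 1) =
      -((qPoch q a (k + 1) * qPoch q b (k + 1) * c ^ (k + 1) /
          (qPoch q q k * qPoch q c (k + 1) * a ^ k * b ^ (k + 1))) *
        (qPoch q (a * q ^ (k + 1)) n * qPoch q (c / b) n * q ^ n /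
          (qPoch q a (n + 1) * qPoch q (c * q ^ (k + 1)) n))) := by
  have hA : qPoch q a (k + 1) * qPoch q (a * q ^ (k + 1)) n =
      qPoch q a (n + 1) * qPoch q (a * q ^ (n + 1)) k := by
    rw [← qPoch_add, ← qPoch_add]
    congr 1
    omega
  have hC : qPoch q c (k + 1) * qPoch q (c * q ^ (k + 1)) n =
      qPoch q c n * qPoch q (c * q ^ n) (k + 1) := by
    rw [← qPoch_add, ← qPoch_add, add_comm]
  have hA' := qPoch_ne_zero ha (n + 1)
  rw [wzG, neg_inj]
  calc _ = c / b * q ^ n * qPoch q (c / b) n * qPoch q b (k + 1) * (c / (a * b)) ^ k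
        / qPoch q q k * (qPoch q a (n + 1) * qPoch q (a * q ^ (n + 1)) k)
        / (qPoch q a (n + 1) * (qPoch q c n * qPoch q (c * q ^ n) (k + 1))) := by
        field_simp
    _ = _ := by
        rw [← hA, ← hC]
        ring

lemma summable_companion {q a c : ℂ} (hq : ‖q‖ < 1) (ha : ∀ j : ℕ, a * q ^ j ≠ 1) (b : ℂ)
    (hc : ∀ j : ℕ, c * q ^ j ≠ 1) (k : ℕ) :
    Summable fun n : ℕ =>
      qPoch q (a * q ^ (k + 1)) n * qPoch q (c / b) n * q ^ n /
        (qPoch q a (n + 1) * qPoch q (c * q ^ (k + 1)) n) := by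
  have hu := ((tendsto_qPoch hq (a * q ^ (k + 1))).mul (tendsto_qPoch hq (c / b))).div
    (((tendsto_qPoch hq a).comp (tendsto_add_atTop_nat 1)).mul
      (tendsto_qPoch hq (c * q ^ (k + 1))))
    (mul_ne_zero (qPochInf_ne_zero hq ha) (qPochInf_ne_zero hq (mul_pow_mul_pow_ne_one hc _)))
  rw [← Nat.cofinite_eq_atTop] at hu
  refine ((summable_norm_geometric_of_norm_lt_one hq).mul_tendsto_const hu).congr fun n => ?_
  simp only [Function.comp_apply, Pi.div_apply]
  ring

theorem q_gauss_companion_general (q a b c : ℂ) (hq : ‖q‖ < 1) (ha : a ≠ 0)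
    (hb : b ≠ 0) (hc : ∀ j : ℕ, c * q ^ j ≠ 1) (ha' : ∀ j : ℕ, a * q ^ j ≠ 1) (k : ℕ) :
    Summable (fun n : ℕ =>
      qPoch q (a * q ^ (k + 1)) n * qPoch q (c / b) n * q ^ n /
        (qPoch q a (n + 1) * qPoch q (c * q ^ (k + 1)) n)) ∧
    ∑ j ∈ Finset.range (k + 1),
        qPoch q a j * qPoch q b j * (c / (a * b)) ^ j / (qPoch q q j * qPoch q c j) =
      (qPochInf q (c / b) / qPochInf q c) *
        ∑ j ∈ Finset.range (k + 1), qPoch q b j * (c / (a * b)) ^ j / qPoch q q j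
      + (qPoch q a (k + 1) * qPoch q b (k + 1) * c ^ (k + 1) /
          (qPoch q q k * qPoch q c (k + 1) * a ^ k * b ^ (k + 1))) *
        ∑' n : ℕ, qPoch q (a * q ^ (k + 1)) n * qPoch q (c / b) n * q ^ n /
          (qPoch q a (n + 1) * qPoch q (c * q ^ (k + 1)) n) := by
  have hT := summable_companion hq ha' b hc k
  refine ⟨hT, ?_⟩
  have hG : Summable fun n => wzG q a b c n (k + 1) := by
    simpa only [wzG_succ ha'] using (hT.mul_left _).neg
  have hwz := sum_range_eq_sub_tsum_of_wz (wzF_succ_sub hq ha hb hc) (fun _ => rfl)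
    (tendsto_sum_wzF hq a b hc (k + 1)) hG
  simpa only [wzF_zero_left, wzG_succ ha', tsum_neg, tsum_mul_left, sub_neg_eq_add] using hwz

/-- The companion identity of the q-Gauss sum (Example 3.1, following (3.12)). -/
theorem q_gauss_companion (q a b c : ℂ) (hq : ‖q‖ < 1) (ha : a ≠ 0)
    (hb : b ≠ 0) (hz : ‖c / (a * b)‖ < 1)
    (hc : ∀ j : ℕ, c * q ^ j ≠ 1) (ha' : ∀ j : ℕ, a * q ^ j ≠ 1) (k : ℕ) :
    Summable (fun n : ℕ =>
      qPoch q (a * q ^ (k + 1)) n * qPoch q (c / b) n * q ^ n /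
        (qPoch q a (n + 1) * qPoch q (c * q ^ (k + 1)) n)) ∧
    ∑ j ∈ Finset.range (k + 1),
        qPoch q a j * qPoch q b j * (c / (a * b)) ^ j / (qPoch q q j * qPoch q c j) =
      (qPochInf q (c / b) / qPochInf q c) *
        ∑ j ∈ Finset.range (k + 1), qPoch q b j * (c / (a * b)) ^ j / qPoch q q j
      + (qPoch q a (k + 1) * qPoch q b (k + 1) * c ^ (k + 1) /
          (qPoch q q k * qPoch q c (k + 1) * a ^ k * b ^ (k + 1))) *
        ∑' n : ℕ, qPoch q (a * q ^ (k + 1)) n * qPoch q (c / b) n * q ^ n /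
          (qPoch q a (n + 1) * qPoch q (c * q ^ (k + 1)) n) :=
  q_gauss_companion_general q a b c hq ha hb hc ha' k
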